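/- arXiv:1503.05879 — 5 statements merged into one kernel-verified Lean document; each statement's English description precedes it below -/
import Mathlib

section
/- Let u and v be prefix-incomparable words over an alphabet Σ and let K = max(|u|,|v|). Then for every natural number k, the set of words of length at most k·K that belong to the language {u,v}* has cardinality at least 2^k. -/
open Computability

/-! Since `u` and `v` are prefix-incomparable, `{u, v}` is a prefix code: the map sending a
Boolean word `b₁ ⋯ bₖ` to the concatenation of the corresponding factors `u`/`v` is injective.
Its `2 ^ k` values on words of length `k` lie in `{u, v}∗` and have length at most
`k * max |u| |v|`. The counted set must also be shown finite (`Set.ncard` is `0` on infinite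
sets); it is, because `u` and `v` are nonempty, so a word of length `n` in `{u, v}∗` is the
image of a Boolean word of length at most `n`. -/

section pairEncode

variable {A : Type*}

theorem List.prefix_or_prefix_of_append_eq_append {u v x y : List A} (h : u ++ x = v ++ y) :
    u <+: v ∨ v <+: u :=
  List.prefix_or_prefix_of_prefix (List.prefix_append u x) (h ▸ List.prefix_append v y)

def pairEncode (u v : List A) (l : List Bool) : List A :=
  l.flatMap (cond · u v)

variable (u v : List A)

@[simp]
theorem pairEncode_nil : pairEncode u v [] = [] := rfl

@[simp]
theorem pairEncode_cons (b : Bool) (l : List Bool) :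
    pairEncode u v (b :: l) = cond b u v ++ pairEncode u v l := rfl

theorem mem_kstar_pair_iff {w : List A} :
    w ∈ ({u, v} : Language A)∗ ↔ ∃ l, pairEncode u v l = w := by
  constructor
  · rintro ⟨L, rfl, hL⟩
    induction L with
    | nil => exact ⟨[], rfl⟩
    | cons y L ih =>
      obtain ⟨l, hl⟩ := ih fun x hx => hL x (List.mem_cons_of_mem y hx)
      rcases hL y List.mem_cons_self with rfl | rfl
      · exact ⟨true :: l, by simp [hl]⟩
      · exact ⟨false :: l, by simp [hl]⟩
  · rintro ⟨l, rfl⟩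
    rw [pairEncode, List.flatMap_def]
    refine Language.join_mem_kstar fun y hy => ?_
    obtain ⟨b, -, rfl⟩ := List.mem_map.1 hy
    cases b
    exacts [Or.inr rfl, Or.inl rfl]

theorem length_pairEncode_le (l : List Bool) :
    (pairEncode u v l).length ≤ l.length * max u.length v.length := by
  induction l with
  | nil => simp
  | cons b l ih =>
    have : (cond b u v).length ≤ max u.length v.length := by cases b <;> simp
    simp only [pairEncode_cons, List.length_append, List.length_cons]
    linarith

theorem length_le_length_pairEncode (hu : u ≠ []) (hv : v ≠ []) (l : List Bool) :
    l.length ≤ (pairEncode u v l).length := by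
  induction l with
  | nil => simp
  | cons b l ih =>
    have : 0 < (cond b u v).length := by cases b <;> simpa [List.length_pos_iff]
    simp only [pairEncode_cons, List.length_append, List.length_cons]
    omega

theorem pairEncode_injective (huv : ¬ u <+: v) (hvu : ¬ v <+: u) :
    Function.Injective (pairEncode u v) := by
  have hne : ∀ b, cond b u v ≠ [] := by
    rintro (_ | _) rfl
    exacts [hvu List.nil_prefix, huv List.nil_prefix]
  intro l₁
  induction l₁ with
  | nil =>
    rintro (_ | ⟨b, l₂⟩) h
    · rfl
    · exact absurd (List.append_eq_nil_iff.1 h.symm).1 (hne b)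
  | cons b₁ l₁ ih =>
    rintro (_ | ⟨b₂, l₂⟩) h
    · exact absurd (List.append_eq_nil_iff.1 h).1 (hne b₁)
    · have hb : b₁ = b₂ := by
        by_contra hb
        have := List.prefix_or_prefix_of_append_eq_append h
        cases b₁ <;> cases b₂ <;> simp_all
      subst hb
      rw [ih (List.append_cancel_left h)]

end pairEncode

theorem ncard_setOf_length_eq (α : Type*) [Fintype α] (k : ℕ) :
    {l : List α | l.length = k}.ncard = Fintype.card α ^ k := by
  rw [← Nat.card_coe_set_eq, ← card_vector, ← Nat.card_eq_fintype_card]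
  rfl

/-- Words in {u,v}* of length at most k·max(|u|,|v|) number at least 2^k. -/
theorem card_kstar_two_words_ge {A : Type*} (u v : List A)
    (huv : ¬ u <+: v) (hvu : ¬ v <+: u) (k : ℕ) :
    2 ^ k ≤
      Set.ncard {w : List A |
        w.length ≤ k * max u.length v.length ∧ w ∈ ({u, v} : Language A)∗} := by
  set n := k * max u.length v.length
  have hu : u ≠ [] := by rintro rfl; exact huv List.nil_prefix
  have hv : v ≠ [] := by rintro rfl; exact hvu List.nil_prefix
  have hfin : {w : List A | w.length ≤ n ∧ w ∈ ({u, v} : Language A)∗}.Finite := by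
    refine ((List.finite_length_le Bool n).image (pairEncode u v)).subset ?_
    rintro w ⟨hw, hmem⟩
    obtain ⟨l, rfl⟩ := (mem_kstar_pair_iff u v).1 hmem
    exact ⟨l, (length_le_length_pairEncode u v hu hv l).trans hw, rfl⟩
  calc 2 ^ k = (pairEncode u v '' {l | l.length = k}).ncard := by
        rw [Set.ncard_image_of_injective _ (pairEncode_injective u v huv hvu),
          ncard_setOf_length_eq, Fintype.card_bool]
    _ ≤ _ := by
        refine Set.ncard_le_ncard ?_ hfin
        rintro _ ⟨l, rfl, rfl⟩
        exact ⟨length_pairEncode_le u v l, (mem_kstar_pair_iff u v).2 ⟨l, rfl⟩⟩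
end

section
/- Let u and v be prefix-incomparable words over an alphabet Σ. Then the language {u,v}* is not bounded: for every finite list of words w₁, …, wₙ over Σ, {u,v}* is not contained in w₁*·w₂*·⋯·wₙ*. -/
/-!
Since `u` and `v` are prefix-incomparable, `{u, v}` is a prefix code: the `2 ^ K` products
`x₁ ⋯ x_K` with `xᵢ ∈ {u, v}` are pairwise distinct, and each has length at most `K m`,
where `m = max |u| |v|`. A word of length at most `N` in `w₁*⋯wₙ*` can be written as
`w₁^k₁ ⋯ wₙ^kₙ` with all `kᵢ ≤ N`, so there are at most `(N + 1) ^ n` such words. Since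
`(K m + 1) ^ n < 2 ^ K` for large `K`, the star `{u, v}*` does not fit into `w₁*⋯wₙ*`.
-/

open Computability

/-- The product of Kleene stars of singletons `w₁*·w₂*·⋯·wₙ*`. -/
def prodStars {A : Type*} (ws : List (List A)) : Language A :=
  (ws.map fun w => ({w} : Language A)∗).prod

open Filter Finset

namespace List

variable {α β : Type*}

theorem flatten_map_injective_of_prefix {f : β → List α} (hne : ∀ b, f b ≠ [])
    (hprefix : ∀ a b, f a <+: f b → a = b) :
    Function.Injective fun s : List β => (s.map f).flatten := by
  intro s t hst
  induction s generalizing t with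
  | nil => cases t <;> simp_all
  | cons a s ih =>
    cases t with
    | nil => simp_all
    | cons b t =>
      simp only [map_cons, flatten_cons] at hst
      obtain rfl : a = b := by
        rcases prefix_or_prefix_of_prefix (prefix_append (f a) _)
            (hst ▸ prefix_append (f b) _) with h | h
        exacts [hprefix a b h, (hprefix b a h).symm]
      rw [ih (append_cancel_left hst)]

theorem length_flatten_map_le {f : β → List α} {m : ℕ} (hf : ∀ b, (f b).length ≤ m)
    (s : List β) : (s.map f).flatten.length ≤ s.length * m := by
  simpa [length_flatten] using
    sum_le_card_nsmul ((s.map f).map length) m (by simpa using fun b _ => hf b)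

end List

namespace Language

variable {α β : Type*}

theorem flatten_map_mem_kstar {l : Language α} {f : β → List α} (hf : ∀ b, f b ∈ l)
    (s : List β) : (s.map f).flatten ∈ l∗ :=
  mem_kstar.2 ⟨_, rfl, by simpa using fun b _ => hf b⟩

theorem exists_le_length_of_mem_kstar_singleton {w x : List α} (hx : x ∈ ({w} : Language α)∗) :
    ∃ k ≤ x.length, x = (List.replicate k w).flatten := by
  obtain ⟨S, rfl, hS⟩ := mem_kstar_iff_exists_nonempty.1 hx
  refine ⟨S.length, ?_, by rw [← List.eq_replicate_iff.2 ⟨rfl, fun y hy => (hS y hy).1⟩]⟩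
  simpa [List.length_flatten] using List.length_le_sum_of_one_le (S.map List.length)
    (by simpa [Nat.one_le_iff_ne_zero] using fun y hy => (hS y hy).2)

end Language

section ProdStars

variable {α : Type*}

theorem prodStars_cons (w : List α) (ws : List (List α)) :
    prodStars (w :: ws) = ({w} : Language α)∗ * prodStars ws := by
  simp [prodStars]

variable [DecidableEq α]

def prodPowsBounded (N : ℕ) : List (List α) → Finset (List α)
  | [] => {[]}
  | w :: ws => image₂ (· ++ ·) ((range (N + 1)).image fun k => (List.replicate k w).flatten)
      (prodPowsBounded N ws)

theorem card_prodPowsBounded_le (N : ℕ) (ws : List (List α)) :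
    #(prodPowsBounded N ws) ≤ (N + 1) ^ ws.length := by
  induction ws with
  | nil => simp [prodPowsBounded]
  | cons w ws ih =>
    calc #(prodPowsBounded N (w :: ws))
        ≤ #((range (N + 1)).image fun k => (List.replicate k w).flatten) *
            #(prodPowsBounded N ws) := card_image₂_le _ _ _
      _ ≤ (N + 1) * (N + 1) ^ ws.length := by
          gcongr
          exact card_image_le.trans (card_range _).le
      _ = (N + 1) ^ (w :: ws).length := by rw [List.length_cons, pow_succ']

theorem mem_prodPowsBounded {N : ℕ} {ws : List (List α)} {x : List α}
    (hx : x ∈ prodStars ws) (hN : x.length ≤ N) : x ∈ prodPowsBounded N ws := by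
  induction ws generalizing x with
  | nil => simpa [prodStars, prodPowsBounded, Language.mem_one] using hx
  | cons w ws ih =>
    rw [prodStars_cons, Language.mem_mul] at hx
    obtain ⟨a, ha, b, hb, rfl⟩ := hx
    obtain ⟨k, hk, rfl⟩ := Language.exists_le_length_of_mem_kstar_singleton ha
    simp only [List.length_append] at hk hN
    exact mem_image₂_of_mem (mem_image_of_mem _ (mem_range.2 (by omega))) (ih hb (by omega))

end ProdStars

theorem eventually_pow_lt_two_pow (m n : ℕ) : ∀ᶠ K : ℕ in atTop, (K * m + 1) ^ n < 2 ^ K := by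
  have hc : (0 : ℝ) < 1 / ((m : ℝ) + 1) ^ n := by positivity
  filter_upwards [(tendsto_pow_const_div_const_pow_of_one_lt n one_lt_two).eventually
    (gt_mem_nhds hc), eventually_ge_atTop 1] with K hK hK1
  have hK1' : (1 : ℝ) ≤ K := by exact_mod_cast hK1
  have : ((K * m + 1 : ℕ) : ℝ) ^ n < 2 ^ K := calc
    ((K * m + 1 : ℕ) : ℝ) ^ n ≤ (((m : ℝ) + 1) * K) ^ n := by
        gcongr
        push_cast
        nlinarith
    _ = ((m : ℝ) + 1) ^ n * ((K : ℝ) ^ n / 2 ^ K) * 2 ^ K := by rw [mul_pow]; field_simp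
    _ < ((m : ℝ) + 1) ^ n * (1 / ((m : ℝ) + 1) ^ n) * 2 ^ K := by gcongr
    _ = 2 ^ K := by field_simp
  exact_mod_cast this

/-- The star of two prefix-incomparable words is not a bounded language. -/
theorem kstar_two_words_not_bounded {A : Type*} (u v : List A)
    (huv : ¬ u <+: v) (hvu : ¬ v <+: u) :
    ∀ ws : List (List A), ¬ (({u, v} : Language A)∗ ≤ prodStars ws) := by
  classical
  intro ws hws
  set m := max u.length v.length
  let f : Bool → List A := fun b => cond b u v
  have hf_mem : ∀ b, f b ∈ ({u, v} : Language A) := by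
    rintro (_ | _)
    exacts [Set.mem_insert_of_mem _ rfl, Set.mem_insert _ _]
  have hf_length : ∀ b, (f b).length ≤ m := by rintro (_ | _) <;> simp [f, m]
  have hf_inj : Function.Injective fun s : List Bool => (s.map f).flatten :=
    List.flatten_map_injective_of_prefix
      (by rintro (_ | _) h <;> simp_all [f, List.nil_prefix])
      (by rintro (_ | _) (_ | _) h <;> simp_all [f])
  obtain ⟨K, hK⟩ := (eventually_pow_lt_two_pow m ws.length).exists
  let g : (Fin K → Bool) → List A := fun s => ((List.ofFn s).map f).flatten
  have hg : ∀ s, g s ∈ prodPowsBounded (K * m) ws := fun s =>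
    mem_prodPowsBounded (hws (Language.flatten_map_mem_kstar hf_mem _))
      (List.length_ofFn (f := s) ▸ List.length_flatten_map_le hf_length (List.ofFn s))
  have hcard := (card_le_card_of_injOn (s := univ) g (fun s _ => hg s)
    (hf_inj.comp List.ofFn_injective).injOn).trans (card_prodPowsBounded_le _ ws)
  simp only [card_univ, Fintype.card_fun, Fintype.card_fin, Fintype.card_bool] at hcard
  exact hK.not_ge hcard
end

section
/- Let M be a DFA over alphabet Σ. Suppose there exist a state q, words p, s with: evaluating M on p from the start state reaches q, reading s from q reaches an accepting state, and there exist words u, v with reading u from q returning to q, reading v from q returning to q, and u, v prefix-incomparable. Then the language accepted by M is not bounded: for every finite list of words w₁, …, wₙ, L(M) is not contained in w₁*·⋯·wₙ*. -/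
/-!
Words of length at most `N` in `w₁*⋯wₙ*` are determined by the `n` exponents, each at most `N`,
so there are only polynomially many of them. On the other hand, since `u` and `v` are
prefix-incomparable, `{u, v}` is a prefix code: the `2ᵏ` concatenations of `k` blocks from
`{u, v}` are pairwise distinct, and `p ++ (blocks) ++ s` is accepted because both blocks loop at
`q`. These words have length linear in `k`, so exponential growth beats polynomial growth.
-/

open Computability

section

variable {A σ : Type*}

lemma exists_flatten_replicate_of_mem_kstar_singleton {w x : List A} {N : ℕ}
    (hx : x ∈ ({w} : Language A)∗) (hN : x.length ≤ N) :
    ∃ m ≤ N, (List.replicate m w).flatten = x := by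
  obtain ⟨L, rfl, hL⟩ := Language.mem_kstar.1 hx
  have hrep : L = List.replicate L.length w := List.eq_replicate_iff.2 ⟨rfl, hL⟩
  rcases eq_or_ne w [] with rfl | hw
  · exact ⟨0, Nat.zero_le _, by simp [List.flatten_eq_nil_iff.2 fun y hy => hL y hy]⟩
  · refine ⟨L.length, ?_, congrArg _ hrep.symm⟩
    rw [hrep] at hN
    simp only [List.length_flatten, List.map_replicate, List.sum_replicate, smul_eq_mul] at hN
    have := List.length_pos_iff.2 hw
    nlinarith

lemma exists_finset_card_le_prodStars_length_le (ws : List (List A)) (N : ℕ) :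
    ∃ S : Finset (List A), S.card ≤ (N + 1) ^ ws.length ∧
      ∀ x ∈ prodStars ws, x.length ≤ N → x ∈ S := by
  classical
  induction ws with
  | nil => exact ⟨{[]}, by simp, fun x hx _ => by simpa [prodStars] using hx⟩
  | cons w ws ih =>
    obtain ⟨S, hcard, hS⟩ := ih
    refine ⟨(Finset.range (N + 1) ×ˢ S).image fun my => (List.replicate my.1 w).flatten ++ my.2,
      ?_, ?_⟩
    · calc _ ≤ (Finset.range (N + 1) ×ˢ S).card := Finset.card_image_le
        _ ≤ (N + 1) * (N + 1) ^ ws.length := by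
          rw [Finset.card_product, Finset.card_range]; exact Nat.mul_le_mul_left _ hcard
        _ = _ := by rw [List.length_cons, pow_succ']
    · intro x hx hN
      rw [prodStars, List.map_cons, List.prod_cons, Language.mem_mul] at hx
      obtain ⟨y, hy, z, hz, rfl⟩ := hx
      rw [List.length_append] at hN
      obtain ⟨m, hm, rfl⟩ := exists_flatten_replicate_of_mem_kstar_singleton hy (by omega : _ ≤ N)
      exact Finset.mem_image.2 ⟨(m, z), by simp [hm, hS z hz (by omega)], rfl⟩

def concatBlocks (u v : List A) (b : List Bool) : List A :=
  (b.map fun t => bif t then u else v).flatten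

section concatBlocks

variable {u v : List A}

lemma length_concatBlocks_le (b : List Bool) :
    (concatBlocks u v b).length ≤ max u.length v.length * b.length := by
  induction b with
  | nil => simp [concatBlocks]
  | cons t b ih =>
    have hblock : (bif t then u else v).length ≤ max u.length v.length := by cases t <;> simp
    rw [concatBlocks, List.map_cons, List.flatten_cons, List.length_append, List.length_cons]
    rw [concatBlocks] at ih
    nlinarith

lemma append_ne_append_of_not_prefix (huv : ¬ u <+: v) (hvu : ¬ v <+: u) (x y : List A) :
    u ++ x ≠ v ++ y := fun h =>
  (List.prefix_or_prefix_of_prefix ⟨x, h⟩ (List.prefix_append v y)).elim huv hvu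

lemma concatBlocks_injective (huv : ¬ u <+: v) (hvu : ¬ v <+: u) :
    Function.Injective (concatBlocks u v) := by
  have hu : u ≠ [] := by rintro rfl; exact huv List.nil_prefix
  have hv : v ≠ [] := by rintro rfl; exact hvu List.nil_prefix
  intro b₁
  induction b₁ with
  | nil =>
    rintro (_ | ⟨t, b⟩) h
    · rfl
    · cases t <;> simp_all [concatBlocks]
  | cons t₁ b₁ ih =>
    rintro (_ | ⟨t₂, b₂⟩) h
    · cases t₁ <;> simp_all [concatBlocks]
    · simp only [concatBlocks, List.map_cons, List.flatten_cons] at h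
      obtain rfl : t₁ = t₂ := by
        cases t₁ <;> cases t₂
        all_goals first
          | rfl
          | exact (append_ne_append_of_not_prefix huv hvu _ _ h).elim
          | exact (append_ne_append_of_not_prefix huv hvu _ _ h.symm).elim
      rw [ih (List.append_cancel_left h)]

end concatBlocks

lemma DFA.evalFrom_flatten_of_forall_eq {M : DFA A σ} {q : σ} {L : List (List A)}
    (hL : ∀ x ∈ L, M.evalFrom q x = q) : M.evalFrom q L.flatten = q := by
  induction L with
  | nil => rfl
  | cons x L ih =>
    rw [List.flatten_cons, DFA.evalFrom_of_append, hL x List.mem_cons_self,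
      ih fun y hy => hL y (List.mem_cons_of_mem x hy)]

open Filter in
lemma exists_linear_pow_lt_two_pow (a c n : ℕ) : ∃ k, (a + c * k) ^ n < 2 ^ k := by
  have hD : (0 : ℝ) < ((a + c + 1 : ℕ) : ℝ) ^ n := by positivity
  obtain ⟨k, hk, hk1⟩ := (((tendsto_pow_const_div_const_pow_of_one_lt n one_lt_two).eventually
    (gt_mem_nhds (inv_pos.2 hD))).and (eventually_ge_atTop 1)).exists
  refine ⟨k, (Nat.pow_le_pow_left (show a + c * k ≤ (a + c + 1) * k by nlinarith) n).trans_lt ?_⟩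
  rw [← Nat.cast_lt (α := ℝ), Nat.cast_pow, Nat.cast_mul, mul_pow]
  calc _ = ((a + c + 1 : ℕ) : ℝ) ^ n * ((k : ℝ) ^ n / 2 ^ k) * 2 ^ k := by field_simp
    _ < ((a + c + 1 : ℕ) : ℝ) ^ n * (((a + c + 1 : ℕ) : ℝ) ^ n)⁻¹ * 2 ^ k := by gcongr
    _ = _ := by rw [mul_inv_cancel₀ hD.ne', one_mul]; norm_cast

lemma DFA.append_concatBlocks_append_mem_accepts {M : DFA A σ} {q : σ} {p s u v : List A}
    (hp : M.evalFrom M.start p = q) (hs : M.evalFrom q s ∈ M.accept)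
    (hu : M.evalFrom q u = q) (hv : M.evalFrom q v = q) (b : List Bool) :
    p ++ concatBlocks u v b ++ s ∈ M.accepts := by
  have hloop : M.evalFrom q (concatBlocks u v b) = q :=
    DFA.evalFrom_flatten_of_forall_eq <| by
      simp only [List.mem_map]
      rintro _ ⟨(_ | _), -, rfl⟩ <;> assumption
  rwa [DFA.mem_accepts, DFA.eval, DFA.evalFrom_of_append, DFA.evalFrom_of_append, hp, hloop]

end

/-- A DFA with two prefix-incomparable cycles at a reachable, co-reachable
state accepts an unbounded language. -/
theorem accepts_not_bounded_of_incomparable_cycles {A σ : Type*} (M : DFA A σ)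
    (q : σ) (p s : List A)
    (hp : M.evalFrom M.start p = q)
    (hs : M.evalFrom q s ∈ M.accept)
    (u v : List A)
    (hu : M.evalFrom q u = q) (hv : M.evalFrom q v = q)
    (huv : ¬ u <+: v) (hvu : ¬ v <+: u) :
    ∀ ws : List (List A), ¬ (M.accepts ≤ prodStars ws) := by
  intro ws hL
  set c := max u.length v.length
  obtain ⟨k, hk⟩ := exists_linear_pow_lt_two_pow (p.length + s.length + 1) c ws.length
  obtain ⟨S, hcard, hS⟩ :=
    exists_finset_card_le_prodStars_length_le ws (p.length + s.length + c * k)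
  let f : (Fin k → Bool) → List A := fun b => p ++ concatBlocks u v (List.ofFn b) ++ s
  have hf : Function.Injective f := fun b₁ b₂ h =>
    List.ofFn_injective <| concatBlocks_injective huv hvu <|
      List.append_cancel_left (List.append_cancel_right h)
  have hfS (b : Fin k → Bool) : f b ∈ S := by
    refine hS _ (hL (DFA.append_concatBlocks_append_mem_accepts hp hs hu hv _)) ?_
    have hlen : (concatBlocks u v (List.ofFn b)).length ≤ c * k := by
      simpa using length_concatBlocks_le (List.ofFn b)
    simp only [f, List.length_append]
    omega
  have h2k : 2 ^ k ≤ S.card := by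
    simpa using Finset.card_le_card_of_injOn (s := .univ) f (fun b _ => hfS b) hf.injOn
  rw [add_right_comm] at hk
  omega
end

section
/- Let M be a DFA over a finite alphabet Σ with finitely many states. Suppose that for every state q of M and all words u, v with reading u from q returning to q and reading v from q returning to q, u is a prefix of v or v is a prefix of u. Then the language accepted by M is bounded: there exist finitely many words w₁, …, wₙ over Σ such that L(M) ⊆ w₁*·w₂*·⋯·wₙ*. -/
/-!
At each state `q` the cycle words are closed under left cancellation and, by hypothesis, totally
ordered by the prefix relation, so they are all powers of the shortest nonempty one: the cycle
language at `q` is contained in `c_q*`. Cutting a run from `q` after its last return to `q` writes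
every word as a cycle at `q`, then a letter `a`, then a run from `q·a` that never visits `q` again.
Induction on the set of states a run may visit then shows that every run language is contained in a
finite product of languages `c*` and `{a}`, and bounded languages are closed under products and
finite unions.
-/

open Computability

namespace Language

variable {α : Type*}

lemma prodStars_append (ws₁ ws₂ : List (List α)) :
    prodStars (ws₁ ++ ws₂) = prodStars ws₁ * prodStars ws₂ := by
  simp [prodStars]

lemma one_le_prodStars (ws : List (List α)) : 1 ≤ prodStars ws :=
  List.one_le_prod_of_one_le fun _ hl => by
    obtain ⟨w, -, rfl⟩ := List.mem_map.mp hl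
    exact one_le_kstar

def IsBounded (L : Language α) : Prop :=
  ∃ ws : List (List α), L ≤ prodStars ws

lemma IsBounded.mono {L L' : Language α} (h : L'.IsBounded) (hle : L ≤ L') : L.IsBounded :=
  let ⟨ws, hws⟩ := h
  ⟨ws, hle.trans hws⟩

lemma isBounded_kstar_singleton (w : List α) : ({w} : Language α)∗.IsBounded :=
  ⟨[w], by simp [prodStars]⟩

lemma isBounded_singleton (w : List α) : ({w} : Language α).IsBounded :=
  (isBounded_kstar_singleton w).mono le_kstar

lemma isBounded_one : (1 : Language α).IsBounded :=
  ⟨[], le_rfl⟩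

lemma isBounded_bot : (⊥ : Language α).IsBounded :=
  ⟨[], bot_le⟩

lemma IsBounded.mul {L L' : Language α} (h : L.IsBounded) (h' : L'.IsBounded) :
    (L * L').IsBounded :=
  let ⟨ws, hws⟩ := h
  let ⟨ws', hws'⟩ := h'
  ⟨ws ++ ws', (prodStars_append ws ws').symm ▸ mul_le_mul' hws hws'⟩

lemma IsBounded.sup {L L' : Language α} (h : L.IsBounded) (h' : L'.IsBounded) :
    (L ⊔ L').IsBounded := by
  obtain ⟨ws, hws⟩ := h
  obtain ⟨ws', hws'⟩ := h'
  refine ⟨ws ++ ws', sup_le ?_ ?_⟩ <;> rw [prodStars_append]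
  · exact hws.trans (le_mul_of_one_le_right' (one_le_prodStars ws'))
  · exact hws'.trans (le_mul_of_one_le_left' (one_le_prodStars ws))

lemma IsBounded.iSup {ι : Type*} [Finite ι] {L : ι → Language α} (h : ∀ i, (L i).IsBounded) :
    (⨆ i, L i).IsBounded := by
  have := Fintype.ofFinite ι
  rw [← Finset.sup_univ_eq_iSup]
  exact Finset.sup_induction isBounded_bot (fun _ h₁ _ h₂ => h₁.sup h₂) fun i _ => h i

lemma append_mem_kstar_singleton {c t : List α} (ht : t ∈ ({c} : Language α)∗) :
    c ++ t ∈ ({c} : Language α)∗ := by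
  obtain ⟨L, rfl, hL⟩ := mem_kstar.mp ht
  exact mem_kstar.mpr ⟨c :: L, rfl, List.forall_mem_cons.mpr ⟨rfl, hL⟩⟩

lemma mem_kstar_singleton_of_minimal {S : Language α}
    (hcancel : ∀ p t, p ∈ S → p ++ t ∈ S → t ∈ S)
    (htotal : ∀ u ∈ S, ∀ v ∈ S, u <+: v ∨ v <+: u)
    {c : List α} (hc : c ∈ S) (hne : c ≠ [])
    (hmin : ∀ v ∈ S, v ≠ [] → c.length ≤ v.length) :
    ∀ u ∈ S, u ∈ ({c} : Language α)∗ := by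
  intro u hu
  rcases eq_or_ne u [] with rfl | hune
  · exact nil_mem_kstar _
  rcases htotal c hc u hu with ⟨t, rfl⟩ | huc
  · have : t.length < (c ++ t).length := by
      simpa [List.length_pos_iff] using hne
    exact append_mem_kstar_singleton
      (mem_kstar_singleton_of_minimal hcancel htotal hc hne hmin t (hcancel c t hc hu))
  · rw [huc.eq_of_length (le_antisymm huc.length_le (hmin u hu hune))]
    exact (le_kstar : ({c} : Language α) ≤ _) rfl
termination_by u => u.length

lemma exists_le_kstar_singleton {S : Language α}
    (hcancel : ∀ p t, p ∈ S → p ++ t ∈ S → t ∈ S)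
    (htotal : ∀ u ∈ S, ∀ v ∈ S, u <+: v ∨ v <+: u) :
    ∃ c, S ≤ ({c} : Language α)∗ := by
  by_cases hS : ∀ u ∈ S, u = []
  · exact ⟨[], fun u hu => by rw [hS u hu]; exact nil_mem_kstar _⟩
  have hS' : ∃ c ∈ S, c ≠ [] := by simpa using hS
  obtain ⟨c, ⟨hc, hne⟩, hmin⟩ := (measure List.length).wf.has_min {c | c ∈ S ∧ c ≠ []} hS'
  exact ⟨c, mem_kstar_singleton_of_minimal hcancel htotal hc hne
    fun v hv hvne => not_lt.mp (hmin v ⟨hv, hvne⟩)⟩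

end Language

namespace DFA

variable {α σ : Type*} (M : DFA α σ)

def cycles (q : σ) : Language α :=
  {u | M.evalFrom q u = q}

def runsWithin (q : σ) (s : Finset σ) : Language α :=
  {u | ∀ v, v <+: u → M.evalFrom q v ∈ s}

lemma isBounded_cycles_of_prefix_total (q : σ)
    (h : ∀ u v, M.evalFrom q u = q → M.evalFrom q v = q → u <+: v ∨ v <+: u) :
    (M.cycles q).IsBounded := by
  obtain ⟨c, hc⟩ := Language.exists_le_kstar_singleton (S := M.cycles q)
    (fun p t (hp : M.evalFrom q p = q) (hpt : M.evalFrom q (p ++ t) = q) => by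
      rwa [evalFrom_of_append, hp] at hpt)
    fun u hu v hv => h u v hu hv
  exact (Language.isBounded_kstar_singleton c).mono hc

lemma exists_eq_append_of_last_return (q : σ) (u : List α) :
    ∃ p r, u = p ++ r ∧ M.evalFrom q p = q ∧
      ∀ v, v <+: r → v ≠ [] → M.evalFrom q v ≠ q := by
  induction u using List.reverseRecOn with
  | nil => exact ⟨[], [], rfl, rfl, fun v hv hne => (hne (List.prefix_nil.mp hv)).elim⟩
  | append_singleton u a ih =>
    obtain ⟨p, r, rfl, hp, hr⟩ := ih
    by_cases hq : M.evalFrom q (p ++ r ++ [a]) = q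
    · exact ⟨p ++ r ++ [a], [], (List.append_nil _).symm, hq,
        fun v hv hne => (hne (List.prefix_nil.mp hv)).elim⟩
    refine ⟨p, r ++ [a], List.append_assoc _ _ _, hp, fun v hv hne => ?_⟩
    rcases List.prefix_concat_iff.mp hv with rfl | hv
    · rwa [List.append_assoc, evalFrom_of_append, hp] at hq
    · exact hr v hv hne

lemma runsWithin_le [DecidableEq σ] {q : σ} {s : Finset σ} :
    M.runsWithin q s ≤
      M.cycles q * (1 ⊔ ⨆ a, {[a]} * M.runsWithin (M.step q a) (s.erase q)) := by
  intro u hu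
  obtain ⟨p, r, rfl, hp, hr⟩ := M.exists_eq_append_of_last_return q u
  refine Language.append_mem_mul hp ?_
  rcases r with _ | ⟨a, r⟩
  · exact Or.inl rfl
  refine Or.inr (Language.mem_iSup.mpr ⟨a, ?_⟩)
  refine Language.append_mem_mul (show [a] ∈ ({[a]} : Language α) from rfl) fun v hv => ?_
  have hav : a :: v <+: a :: r := (List.prefix_cons_inj a).mpr hv
  rw [← evalFrom_cons]
  refine Finset.mem_erase.mpr ⟨hr _ hav (List.cons_ne_nil a v), ?_⟩
  simpa only [evalFrom_of_append, hp] using hu _ ((List.prefix_append_right_inj p).mpr hav)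

lemma isBounded_runsWithin [Finite α] [DecidableEq σ]
    (hcycles : ∀ q, (M.cycles q).IsBounded) (s : Finset σ) (q : σ) :
    (M.runsWithin q s).IsBounded := by
  induction s using Finset.strongInduction generalizing q with
  | H s ih =>
    by_cases hq : q ∈ s
    · refine Language.IsBounded.mono ?_ M.runsWithin_le
      refine (hcycles q).mul (Language.isBounded_one.sup (Language.IsBounded.iSup fun a => ?_))
      exact (Language.isBounded_singleton [a]).mul (ih _ (Finset.erase_ssubset hq) _)
    · refine Language.isBounded_bot.mono fun u hu => hq ?_
      simpa using hu [] List.nil_prefix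

end DFA

/-- If all cycle words at each state are pairwise prefix-comparable,
then the accepted language is bounded. -/
theorem accepts_bounded_of_comparable_cycles {A σ : Type*} [Fintype A] [Fintype σ]
    (M : DFA A σ)
    (h : ∀ (q : σ) (u v : List A),
      M.evalFrom q u = q → M.evalFrom q v = q → u <+: v ∨ v <+: u) :
    ∃ ws : List (List A), M.accepts ≤ prodStars ws := by
  classical
  obtain ⟨ws, hws⟩ := M.isBounded_runsWithin (fun q => M.isBounded_cycles_of_prefix_total q (h q))
    Finset.univ M.start
  exact ⟨ws, fun u _ => hws fun v _ => Finset.mem_univ _⟩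
end

section
/- Let S be a set of nonempty words over Σ that is closed under concatenation (if u ∈ S and v ∈ S then uv ∈ S) and such that any two elements of S are prefix-comparable (for all u, v ∈ S, u is a prefix of v or v is a prefix of u). Then there exists a word z such that every element of S is a power of z (for every u ∈ S there is k ∈ ℕ with u = z^k). -/
open Computability

private lemma pow_flatten_succ {A : Type*} (z : List A) (n : ℕ) :
    (List.replicate (n + 1) z).flatten = z ++ (List.replicate n z).flatten := by
  rw [List.replicate_succ, List.flatten_cons]

private lemma pow_flatten_length {A : Type*} (z : List A) (n : ℕ) :
    (List.replicate n z).flatten.length = n * z.length := by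
  induction n with
  | zero => simp
  | succ n ih => rw [pow_flatten_succ, List.length_append, ih]; ring

private lemma comm_pow {A : Type*} {u a : List A} (h : u ++ a = a ++ u) (n : ℕ) :
    u ++ (List.replicate n a).flatten = (List.replicate n a).flatten ++ u := by
  induction n with
  | zero => simp
  | succ n ih =>
      rw [pow_flatten_succ, ← List.append_assoc, h, List.append_assoc, ih,
        ← List.append_assoc]

private lemma pow_prefix_pow {A : Type*} (a : List A) {m n : ℕ} (h : m ≤ n) :
    (List.replicate m a).flatten <+: (List.replicate n a).flatten := by
  obtain ⟨k, rfl⟩ := Nat.exists_eq_add_of_le h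
  rw [List.replicate_add, List.flatten_append]
  exact List.prefix_append _ _

/-- Every word commuting with a nonempty word `a` is a prefix of a big power of `a`. -/
private lemma prefix_of_pow {A : Type*} {u a : List A} (ha : a ≠ [])
    (h : u ++ a = a ++ u) : u <+: (List.replicate u.length a).flatten := by
  have h1 : u <+: (List.replicate u.length a).flatten ++ u := by
    rw [← comm_pow h]; exact List.prefix_append _ _
  refine List.prefix_of_prefix_length_le h1 (List.prefix_append _ _) ?_
  rw [pow_flatten_length]
  have : 1 ≤ a.length := List.length_pos_iff.mpr ha
  calc u.length = u.length * 1 := (mul_one _).symm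
    _ ≤ u.length * a.length := Nat.mul_le_mul_left _ this

/-- A concatenation-closed set of nonempty, pairwise prefix-comparable
words consists of powers of a single word. -/
theorem comparable_closed_set_powers_of_common_word {A : Type*} (S : Set (List A))
    (hne : ∀ u ∈ S, u ≠ [])
    (hmul : ∀ u ∈ S, ∀ v ∈ S, u ++ v ∈ S)
    (hcomp : ∀ u ∈ S, ∀ v ∈ S, u <+: v ∨ v <+: u) :
    ∃ z : List A, ∀ u ∈ S, ∃ k : ℕ, u = (List.replicate k z).flatten := by
  rcases S.eq_empty_or_nonempty with rfl | ⟨a, haS⟩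
  · exact ⟨[], fun u hu => absurd hu (Set.notMem_empty u)⟩
  have ha : a ≠ [] := hne a haS
  -- every element of S commutes with a
  have hcommS : ∀ u ∈ S, u ++ a = a ++ u := by
    intro u hu
    have h1 : u ++ a ∈ S := hmul u hu a haS
    have h2 : a ++ u ∈ S := hmul a haS u hu
    rcases hcomp _ h1 _ h2 with h | h
    · exact h.eq_of_length (by simp [Nat.add_comm])
    · exact (h.eq_of_length (by simp [Nat.add_comm])).symm
  -- take z a shortest nonempty word commuting with a
  have hPa : ∃ n, ∃ u : List A, u ≠ [] ∧ u ++ a = a ++ u ∧ u.length = n :=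
    ⟨a.length, a, ha, rfl, rfl⟩
  classical
  obtain ⟨z, hz_ne, hz_comm, hz_len⟩ := Nat.find_spec hPa
  have hz_min : ∀ u : List A, u ≠ [] → u ++ a = a ++ u → z.length ≤ u.length := by
    intro u hu hc
    rw [hz_len]
    exact Nat.find_min' hPa ⟨u, hu, hc, rfl⟩
  refine ⟨z, fun u hu => ?_⟩
  -- main claim: every word commuting with a is a power of z
  have hmain : ∀ n, ∀ u : List A, u.length = n → u ++ a = a ++ u →
      ∃ k, u = (List.replicate k z).flatten := by
    intro n
    induction n using Nat.strong_induction_on with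
    | _ n ih =>
      intro u hlen hcomm
      rcases eq_or_ne u [] with rfl | hu_ne
      · exact ⟨0, rfl⟩
      have hle : z.length ≤ u.length := hz_min u hu_ne hcomm
      -- z and u are both prefixes of a large power of a, hence comparable
      have hzu : z <+: u := by
        set N := max z.length u.length with hN
        have hz_pref : z <+: (List.replicate N a).flatten :=
          (prefix_of_pow ha hz_comm).trans (pow_prefix_pow a (le_max_left _ _))
        have hu_pref : u <+: (List.replicate N a).flatten :=
          (prefix_of_pow ha hcomm).trans (pow_prefix_pow a (le_max_right _ _))
        exact List.prefix_of_prefix_length_le hz_pref hu_pref hle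
      obtain ⟨w, rfl⟩ := hzu
      -- w commutes with a
      have hw_comm : w ++ a = a ++ w := by
        apply List.append_cancel_left (as := z)
        rw [← List.append_assoc, ← List.append_assoc, hcomm, ← List.append_assoc,
          hz_comm, List.append_assoc]
      have hw_lt : w.length < n := by
        rw [← hlen, List.length_append]
        have : 0 < z.length := List.length_pos_iff.mpr hz_ne
        omega
      obtain ⟨k, hk⟩ := ih w.length hw_lt w rfl hw_comm
      exact ⟨k + 1, by rw [pow_flatten_succ, hk]⟩
  obtain ⟨k, hk⟩ := hmain u.length u rfl (hcommS u hu)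
  exact ⟨k, hk⟩
end
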